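/- Consider the unweighted path graph on V_k = {-k,...,k} with u > 0 and H_k = L + u δ_0, with spectral gap Γ(k) = λ_1(H_k) - λ_0(H_k). Then (2k+1)² · Γ(k) → 0 as k → ∞. In particular, the gap closes strictly faster than the gap of the free Laplacian on the same graph (for which the rescaled gap tends to π²). -/

import Mathlib

open Filter Real Matrix

/-- Real version of the weighted Laplacian plus potential `u δ₀` on the path graph with
vertex set `{-k, …, k}` (encoded as `Fin (2*k+1)`, the vertex of index `i` being `i - k`):
`(H f)(v) = ∑_{w : |v-w|=1} γ v w (f v - f w) + u · [v = 0] · f v`. -/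
noncomputable def pathHR (k : ℕ) (γ : ℤ → ℤ → ℝ) (u : ℝ) :
    Matrix (Fin (2 * k + 1)) (Fin (2 * k + 1)) ℝ := fun i j =>
  if i = j then
    ((∑ w : Fin (2 * k + 1),
        if |((i : ℤ) - k) - ((w : ℤ) - k)| = 1 then γ ((i : ℤ) - k) ((w : ℤ) - k) else 0)
      + if ((i : ℤ) - k) = 0 then u else 0)
  else if |((i : ℤ) - k) - ((j : ℤ) - k)| = 1 then -γ ((i : ℤ) - k) ((j : ℤ) - k) else 0

/-- The operator `H = L_γ + u δ₀` as a complex matrix on `ℂ^{2k+1}`. -/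
noncomputable def pathH (k : ℕ) (γ : ℤ → ℤ → ℝ) (u : ℝ) :
    Matrix (Fin (2 * k + 1)) (Fin (2 * k + 1)) ℂ :=
  (pathHR k γ u).map (fun x => (x : ℂ))

lemma pathH_isHermitian (k : ℕ) (γ : ℤ → ℤ → ℝ) (u : ℝ)
    (hsym : ∀ v w : ℤ, γ v w = γ w v) : (pathH k γ u).IsHermitian := by
  have hAR : (pathHR k γ u)ᵀ = pathHR k γ u := by
    ext i j
    unfold pathHR
    by_cases h : i = j
    · subst h; rfl
    · show (if j = i then _ else _) = _
      simp only [if_neg h, if_neg (Ne.symm h)]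
      rw [abs_sub_comm, hsym]
  unfold Matrix.IsHermitian pathH
  rw [← Matrix.conjTranspose_map _ (by intro x; simp [Complex.conj_ofReal]),
    show (pathHR k γ u)ᴴ = (pathHR k γ u)ᵀ from rfl, hAR]

/-- Sorted (increasing) enumeration of the eigenvalues of a Hermitian matrix. -/
noncomputable def sortedEig {n : ℕ} {A : Matrix (Fin n) (Fin n) ℂ} (hA : A.IsHermitian) :
    Fin n → ℝ :=
  hA.eigenvalues ∘ Tuple.sort hA.eigenvalues

/-!
Both `λ₀(H_k)` and `λ₁(H_k)` lie between `2 - 2 cos (π / (n + 4/u))` and `2 - 2 cos (π / n)`,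
where `n = 2k + 1`.

For the lower bound, `φ(x) = sin (θ (|x| + 2/u))` with `θ = π / (n + 4/u)` is a positive
supersolution, `H φ ≥ (2 - 2 cos θ) φ`: away from the centre it solves the free eigenvalue
equation, the choice of `θ` makes it reflect at `±k`, and at the centre the potential wins
because `tan t ≥ t`. For a matrix with non-positive off-diagonal entries this bounds every
eigenvalue from below (Gershgorin's theorem for `D⁻¹ H D`, `D = diag φ`).

For the upper bound, `sin (π x / n)` is an eigenvector of `H_k` and `sin (π |x| / n)` fails to be
one only at the centre, where both vanish, so the quadratic form of `H_k` equals
`2 - 2 cos (π / n)` times the norm on their span. By the min-max principle at least two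
eigenvalues lie below that value.

The two bounds differ by `O(1 / (u n³))`.
-/

open Finset Module

section MinMax

variable {𝕜 E ι : Type*} [RCLike 𝕜] [NormedAddCommGroup E] [InnerProductSpace 𝕜 E] [Fintype ι]

theorem LinearMap.IsSymmetric.re_inner_map_self_sub_eq_sum {T : E →ₗ[𝕜] E} (hT : T.IsSymmetric)
    (b : OrthonormalBasis ι 𝕜 E) {e : ι → ℝ} (hb : ∀ i, T (b i) = (e i : 𝕜) • b i)
    (c : ℝ) (x : E) :
    RCLike.re (inner 𝕜 x (T x)) - c * ‖x‖ ^ 2 = ∑ i, (e i - c) * ‖inner 𝕜 (b i) x‖ ^ 2 := by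
  have hcoord : ∀ i, inner 𝕜 (b i) (T x) = e i * inner 𝕜 (b i) x := fun i => by
    rw [← hT, hb, inner_smul_left, RCLike.conj_ofReal]
  rw [← b.sum_inner_mul_inner x (T x), ← b.sum_sq_norm_inner_right x, mul_sum, map_sum,
    ← sum_sub_distrib]
  refine sum_congr rfl fun i _ => ?_
  rw [hcoord, ← inner_conj_symm, mul_left_comm, RCLike.conj_mul, ← RCLike.ofReal_pow,
    ← RCLike.ofReal_mul, RCLike.ofReal_re]
  ring

theorem LinearMap.IsSymmetric.finrank_le_card_le_of_re_inner_le {T : E →ₗ[𝕜] E}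
    (hT : T.IsSymmetric) (b : OrthonormalBasis ι 𝕜 E) {e : ι → ℝ}
    (hb : ∀ i, T (b i) = (e i : 𝕜) • b i) {c : ℝ} (S : Submodule 𝕜 E)
    (hS : ∀ x ∈ S, RCLike.re (inner 𝕜 x (T x)) ≤ c * ‖x‖ ^ 2) :
    finrank 𝕜 S ≤ #{i | e i ≤ c} := by
  let P : S →ₗ[𝕜] {i // e i ≤ c} → 𝕜 :=
    { toFun x i := inner 𝕜 (b i) (x : E)
      map_add' x y := by ext; simp [inner_add_right]
      map_smul' a x := by ext; simp [inner_smul_right] }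
  have hP : Function.Injective P := by
    rw [← LinearMap.ker_eq_bot, LinearMap.ker_eq_bot']
    intro x hx
    have hlow : ∀ i, e i ≤ c → inner 𝕜 (b i) (x : E) = 0 := fun i hi => congrFun hx ⟨i, hi⟩
    have hterm : ∀ i ∈ univ, 0 ≤ (e i - c) * ‖inner 𝕜 (b i) (x : E)‖ ^ 2 := fun i _ => by
      rcases le_or_gt (e i) c with hi | hi
      · simp [hlow i hi]
      · exact mul_nonneg (by linarith) (by positivity)
    have hsum : ∑ i, (e i - c) * ‖inner 𝕜 (b i) (x : E)‖ ^ 2 ≤ 0 := by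
      rw [← hT.re_inner_map_self_sub_eq_sum b hb c x]
      linarith [hS x x.2]
    have hzero : ∀ i, inner 𝕜 (b i) (x : E) = 0 := fun i => by
      have := (sum_eq_zero_iff_of_nonneg hterm).mp (le_antisymm hsum (sum_nonneg hterm)) i
        (mem_univ i)
      rcases le_or_gt (e i) c with hi | hi
      · exact hlow i hi
      · simpa [(sub_pos.mpr hi).ne'] using this
    have hnorm : ‖(x : E)‖ ^ 2 = 0 := by simp [← b.sum_sq_norm_inner_right, hzero]
    simpa using hnorm
  simpa [Fintype.card_subtype] using LinearMap.finrank_le_finrank_of_injective hP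

end MinMax

namespace Matrix.IsHermitian

variable {𝕜 n : Type*} [RCLike 𝕜] [Fintype n] [DecidableEq n] {A : Matrix n n 𝕜}

theorem finrank_le_card_eigenvalues_le (hA : A.IsHermitian) {c : ℝ} (S : Submodule 𝕜 (n → 𝕜))
    (hS : ∀ x ∈ S, RCLike.re (star x ⬝ᵥ A *ᵥ x) ≤ c * RCLike.re (star x ⬝ᵥ x)) :
    finrank 𝕜 S ≤ #{i | hA.eigenvalues i ≤ c} := by
  have hb : ∀ i, toEuclideanLin A (hA.eigenvectorBasis i)
      = (hA.eigenvalues i : 𝕜) • hA.eigenvectorBasis i := fun i => by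
    rw [← RCLike.real_smul_eq_coe_smul]
    ext1
    simpa only [toLpLin_apply, WithLp.ofLp_smul] using congrFun (hA.mulVec_eigenvectorBasis i) _
  let e := (WithLp.linearEquiv 2 𝕜 (n → 𝕜)).symm
  rw [← e.finrank_map_eq]
  refine (isSymmetric_toEuclideanLin_iff.mpr hA).finrank_le_card_le_of_re_inner_le
    hA.eigenvectorBasis hb _ fun x hx => ?_
  obtain ⟨y, hy, rfl⟩ := Submodule.mem_map.mp hx
  have hnorm : RCLike.re (star y ⬝ᵥ y) = ‖(WithLp.toLp 2 y : EuclideanSpace 𝕜 n)‖ ^ 2 := by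
    rw [← inner_self_eq_norm_sq (𝕜 := 𝕜), EuclideanSpace.inner_eq_star_dotProduct,
      dotProduct_comm]
  change RCLike.re (inner 𝕜 (WithLp.toLp 2 y) (toEuclideanLin A (WithLp.toLp 2 y))) ≤
    c * ‖(WithLp.toLp 2 y : EuclideanSpace 𝕜 n)‖ ^ 2
  rw [← hnorm, EuclideanSpace.inner_eq_star_dotProduct, dotProduct_comm]
  exact hS y hy

theorem hasEigenvalue_eigenvalues (hA : A.IsHermitian) (i : n) :
    Module.End.HasEigenvalue (toLin' A) (hA.eigenvalues i : 𝕜) :=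
  Module.End.hasEigenvalue_of_hasEigenvector
    ⟨Module.End.mem_eigenspace_iff.mpr (by
      rw [toLin'_apply, ← RCLike.real_smul_eq_coe_smul]
      exact hA.mulVec_eigenvectorBasis i),
     fun h => hA.eigenvectorBasis.orthonormal.ne_zero i ((WithLp.ofLp_eq_zero 2).mp h)⟩

end Matrix.IsHermitian

section SortedEigenvalues

variable {m : ℕ} {A : Matrix (Fin m) (Fin m) ℂ} (hA : A.IsHermitian)

theorem sortedEig_monotone : Monotone (sortedEig hA) :=
  Tuple.monotone_sort _

theorem sortedEig_le_of_lt_card {c : ℝ} (j : Fin m)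
    (hj : (j : ℕ) < #{i | hA.eigenvalues i ≤ c}) : sortedEig hA j ≤ c := by
  by_contra! hc
  let σ := Tuple.sort hA.eigenvalues
  have hsub : #{i | hA.eigenvalues i ≤ c} ≤ #(Iio j) := by
    refine card_le_card_of_injOn σ.symm (fun i hi => ?_) σ.symm.injective.injOn
    rw [mem_coe, mem_filter] at hi
    rw [mem_coe, mem_Iio]
    by_contra! hji
    have hle : sortedEig hA j ≤ sortedEig hA (σ.symm i) := sortedEig_monotone hA hji
    have hσ : sortedEig hA (σ.symm i) = hA.eigenvalues i := by simp [sortedEig, σ]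
    linarith [hi.2]
  rw [Fin.card_Iio] at hsub
  omega

theorem sortedEig_one_le_of_linearIndependent (h1 : 1 < m) {c : ℝ} {v w : Fin m → ℂ}
    (hvw : LinearIndependent ℂ ![v, w])
    (hS : ∀ x ∈ Submodule.span ℂ {v, w}, (star x ⬝ᵥ A *ᵥ x).re ≤ c * (star x ⬝ᵥ x).re) :
    sortedEig hA ⟨1, h1⟩ ≤ c := by
  apply sortedEig_le_of_lt_card hA
  have hcard := hA.finrank_le_card_eigenvalues_le _ hS
  rw [← Matrix.range_cons_cons_empty v w ![], finrank_span_eq_card hvw, Fintype.card_fin] at hcard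
  exact hcard

end SortedEigenvalues

theorem Matrix.hasEigenvalue_toLin'_diagonal_conj {n : Type*} [Fintype n] [DecidableEq n]
    {A : Matrix n n ℝ} {φ : n → ℝ} (hφ : ∀ i, φ i ≠ 0) {ν : ℂ}
    (hν : Module.End.HasEigenvalue (toLin' (A.map (fun x => (x : ℂ)))) ν) :
    Module.End.HasEigenvalue (toLin' (of fun i j => ((A i j * φ j / φ i : ℝ) : ℂ))) ν := by
  obtain ⟨v, hv, hv0⟩ := hν.exists_hasEigenvector
  rw [Module.End.mem_eigenspace_iff, toLin'_apply] at hv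
  refine Module.End.hasEigenvalue_of_hasEigenvector (x := fun j => v j / φ j)
    ⟨Module.End.mem_eigenspace_iff.mpr ?_, fun h => hv0 ?_⟩
  · ext i
    have hvi := congrFun hv i
    simp only [mulVec, dotProduct, map_apply, Pi.smul_apply, smul_eq_mul] at hvi
    simp only [toLin'_apply, mulVec, dotProduct, of_apply, Pi.smul_apply, smul_eq_mul]
    rw [← mul_div_assoc, ← hvi, sum_div]
    refine sum_congr rfl fun j _ => ?_
    have hφi : (φ i : ℂ) ≠ 0 := Complex.ofReal_ne_zero.mpr (hφ i)
    have hφj : (φ j : ℂ) ≠ 0 := Complex.ofReal_ne_zero.mpr (hφ j)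
    push_cast
    field_simp
  · ext j
    simpa [hφ j] using congrFun h j

theorem Matrix.le_re_of_hasEigenvalue_of_supersolution {n : Type*} [Fintype n] [DecidableEq n]
    {A : Matrix n n ℝ} (hoff : ∀ i j, i ≠ j → A i j ≤ 0) {φ : n → ℝ} (hφ : ∀ i, 0 < φ i)
    {μ : ℝ} (hμ : ∀ i, μ * φ i ≤ (A *ᵥ φ) i) {ν : ℂ}
    (hν : Module.End.HasEigenvalue (toLin' (A.map (fun x => (x : ℂ)))) ν) : μ ≤ ν.re := by
  let B : Matrix n n ℂ := of fun i j => (A i j * φ j / φ i : ℝ)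
  have hB : Module.End.HasEigenvalue (toLin' B) ν :=
    hasEigenvalue_toLin'_diagonal_conj (fun i => (hφ i).ne') hν
  obtain ⟨k, hk⟩ := eigenvalue_mem_ball hB
  rw [Metric.mem_closedBall, Complex.dist_eq] at hk
  have hrad : ∑ j ∈ univ.erase k, ‖B k j‖ ≤ A k k - μ := by
    have hnorm : ∀ j ∈ univ.erase k, ‖B k j‖ = -(A k j * φ j) / φ k := fun j hj => by
      change ‖((A k j * φ j / φ k : ℝ) : ℂ)‖ = _
      rw [Complex.norm_real, Real.norm_eq_abs, abs_of_nonpos, neg_div]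
      exact div_nonpos_of_nonpos_of_nonneg
        (mul_nonpos_of_nonpos_of_nonneg (hoff k j (ne_of_mem_erase hj).symm) (hφ j).le) (hφ k).le
    rw [sum_congr rfl hnorm, ← sum_div, sum_neg_distrib, sum_erase_eq_sub (mem_univ k),
      div_le_iff₀ (hφ k)]
    have := hμ k
    simp only [mulVec, dotProduct] at this
    linarith
  have hre : A k k - ν.re ≤ ‖ν - B k k‖ := by
    have hBkk : B k k = (A k k : ℂ) := by simp [B, (hφ k).ne']
    calc A k k - ν.re = -(ν - B k k).re := by simp [hBkk]
      _ ≤ ‖ν - B k k‖ := (neg_le_abs _).trans (Complex.abs_re_le_norm _)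
  linarith

theorem two_mul_sin_sub_sin_sub_sin_add (t θ : ℝ) :
    2 * sin t - sin (t - θ) - sin (t + θ) = (2 - 2 * cos θ) * sin t := by
  rw [sin_sub, sin_add]
  ring

theorem sin_mul_second_diff (θ : ℝ) (x : ℤ) :
    2 * sin (θ * x) - sin (θ * ((x - 1 : ℤ) : ℝ)) - sin (θ * ((x + 1 : ℤ) : ℝ))
      = (2 - 2 * cos θ) * sin (θ * x) := by
  rw [← two_mul_sin_sub_sin_sub_sin_add _ θ]
  push_cast
  ring_nf

theorem sin_mul_abs_second_diff (θ α : ℝ) {x : ℤ} (hx : x ≠ 0) :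
    2 * sin (θ * |(x : ℝ)| + α) - sin (θ * |((x - 1 : ℤ) : ℝ)| + α)
      - sin (θ * |((x + 1 : ℤ) : ℝ)| + α) = (2 - 2 * cos θ) * sin (θ * |(x : ℝ)| + α) := by
  rw [← two_mul_sin_sub_sin_sub_sin_add _ θ]
  push_cast
  rcases hx.lt_or_gt with hneg | hpos
  · have h1 : (x : ℝ) ≤ -1 := by exact_mod_cast Int.le_sub_one_of_lt hneg
    rw [abs_of_neg (by linarith), abs_of_neg (by linarith), abs_of_nonpos (by linarith)]
    ring_nf
  · have h1 : (1 : ℝ) ≤ x := by exact_mod_cast hpos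
    rw [abs_of_pos (by linarith), abs_of_nonneg (by linarith), abs_of_pos (by linarith)]
    ring_nf

theorem two_mul_sin_mul_cos_le_mul_sin {u θ : ℝ} (hu : 0 < u) (hθ : 0 < θ)
    (hlt : θ * (2 / u) < π / 2) : 2 * sin θ * cos (θ * (2 / u)) ≤ u * sin (θ * (2 / u)) := by
  set t := θ * (2 / u)
  have ht : 0 < t := by positivity
  have hcos : 0 < cos t := cos_pos_of_mem_Ioo ⟨by linarith, hlt⟩
  have htan : t * cos t < sin t := by
    rw [← lt_div_iff₀ hcos, ← tan_eq_sin_div_cos]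
    exact lt_tan ht hlt
  have hut : u * t = 2 * θ := by
    simp only [t]
    field_simp
  calc 2 * sin θ * cos t ≤ 2 * θ * cos t := by gcongr; exact sin_le hθ.le
    _ = u * (t * cos t) := by rw [← hut]; ring
    _ ≤ u * sin t := by gcongr

theorem cos_sub_cos_le_sq_sub_sq_div_two {a b : ℝ} (ha : 0 ≤ a) (hab : a ≤ b) (hb : b ≤ π) :
    cos a - cos b ≤ (b ^ 2 - a ^ 2) / 2 := by
  have hsum : 0 ≤ sin ((a + b) / 2) := sin_nonneg_of_nonneg_of_le_pi (by linarith) (by linarith)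
  have hdiff : 0 ≤ sin ((b - a) / 2) := sin_nonneg_of_nonneg_of_le_pi (by linarith) (by linarith)
  calc cos a - cos b = 2 * sin ((a + b) / 2) * sin ((b - a) / 2) := by
        rw [cos_sub_cos, show (a - b) / 2 = -((b - a) / 2) by ring, sin_neg]
        ring
    _ ≤ 2 * ((a + b) / 2) * ((b - a) / 2) := by
        have h₁ := sin_le (show 0 ≤ (a + b) / 2 by linarith)
        have h₂ := sin_le (show 0 ≤ (b - a) / 2 by linarith)
        nlinarith
    _ = (b ^ 2 - a ^ 2) / 2 := by ring

section PathOperator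

variable {k : ℕ} {u θ : ℝ}

theorem pathHR_one_apply_nonpos {i j : Fin (2 * k + 1)} (hij : i ≠ j) :
    pathHR k (fun _ _ => 1) u i j ≤ 0 := by
  unfold pathHR
  rw [if_neg hij]
  split_ifs <;> norm_num

theorem pathHR_one_mulVec_apply (f : Fin (2 * k + 1) → ℝ) (i : Fin (2 * k + 1)) :
    (pathHR k (fun _ _ => 1) u *ᵥ f) i =
      (∑ j : Fin (2 * k + 1), if |((i : ℤ) - k) - ((j : ℤ) - k)| = 1 then f i - f j else 0)
        + if (i : ℤ) - k = 0 then u * f i else 0 := by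
  have hentry : ∀ j, pathHR k (fun _ _ => 1) u i j =
      (if i = j then (∑ w : Fin (2 * k + 1),
          if |((i : ℤ) - k) - ((w : ℤ) - k)| = 1 then (1 : ℝ) else 0)
          + if (i : ℤ) - k = 0 then u else 0 else 0)
        - if |((i : ℤ) - k) - ((j : ℤ) - k)| = 1 then 1 else 0 := fun j => by
    unfold pathHR
    split_ifs <;> simp_all
  simp only [mulVec, dotProduct, hentry, sub_mul, ite_mul, zero_mul, one_mul, sum_sub_distrib,
    sum_ite_eq, mem_univ, if_true, add_mul, sum_mul]
  rw [add_sub_right_comm, ← sum_sub_distrib]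
  congr 1
  exact sum_congr rfl fun j _ => by split_ifs <;> ring

theorem sum_fin_sub_eq_sum_Icc {M : Type*} [AddCommMonoid M] (G : ℤ → M) :
    ∑ j : Fin (2 * k + 1), G ((j : ℤ) - k) = ∑ y ∈ Icc (-k : ℤ) k, G y := by
  refine sum_nbij' (fun j => (j : ℤ) - k) (fun y => Fin.ofNat _ (y + k).toNat) ?_ ?_ ?_ ?_ ?_
  all_goals intro j hj
  all_goals simp only [mem_Icc, mem_univ, Fin.ext_iff, Fin.val_ofNat] at hj ⊢
  · omega
  · rw [Nat.mod_eq_of_lt] <;> omega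
  · rw [Nat.mod_eq_of_lt] <;> omega

/-- The reflection conditions let the free second difference stand in for the missing
neighbour at either end of the path. -/
theorem pathHR_one_mulVec_of_reflecting (F : ℤ → ℝ) (hL : F (-k - 1) = F (-k))
    (hR : F (k + 1) = F k) {i : Fin (2 * k + 1)} {x : ℤ} (hx : (i : ℤ) - k = x) :
    (pathHR k (fun _ _ => 1) u *ᵥ fun j => F ((j : ℤ) - k)) i =
      2 * F x - F (x - 1) - F (x + 1) + if x = 0 then u * F x else 0 := by
  rw [pathHR_one_mulVec_apply, hx,
    sum_fin_sub_eq_sum_Icc (fun y => if |x - y| = 1 then F x - F y else 0)]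
  have hxk : -(k : ℤ) ≤ x ∧ x ≤ k := by omega
  rw [sum_eq_add (x - 1) (x + 1) (by omega)]
  · simp only [show |x - (x - 1)| = 1 by simp, show |x - (x + 1)| = 1 by simp, if_true]
    ring
  · intro y _ hy
    exact if_neg (by rw [abs_eq zero_le_one]; omega)
  · intro hout
    rw [show x = -k by rw [mem_Icc] at hout; omega]
    simp [hL]
  · intro hout
    rw [show x = k by rw [mem_Icc] at hout; omega]
    simp [hR]

theorem pathHR_one_mulVec_sin_mul (hθ : θ * (2 * k + 1) = π) {i : Fin (2 * k + 1)} {x : ℤ}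
    (hx : (i : ℤ) - k = x) :
    (pathHR k (fun _ _ => 1) u *ᵥ fun j => sin (θ * (((j : ℤ) - k : ℤ) : ℝ))) i
      = (2 - 2 * cos θ) * sin (θ * x) := by
  have hreflect : sin (θ * ((k + 1 : ℤ) : ℝ)) = sin (θ * (k : ℤ)) := by
    rw [← sin_pi_sub]
    congr 1
    push_cast
    linear_combination -hθ
  rw [pathHR_one_mulVec_of_reflecting (fun y : ℤ => sin (θ * y)) ?_ hreflect hx,
    sin_mul_second_diff]
  · split_ifs with h0 <;> simp [h0]
  · push_cast at hreflect ⊢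
    rw [show θ * (-k - 1) = -(θ * (k + 1)) by ring, mul_neg, sin_neg, sin_neg, hreflect]

theorem pathHR_one_mulVec_sin_mul_abs {α : ℝ} (hθ : θ * (2 * k + 1) + 2 * α = π)
    {i : Fin (2 * k + 1)} {x : ℤ} (hx : (i : ℤ) - k = x) :
    (pathHR k (fun _ _ => 1) u *ᵥ fun j => sin (θ * |(((j : ℤ) - k : ℤ) : ℝ)| + α)) i
      = (2 - 2 * cos θ) * sin (θ * |(x : ℝ)| + α)
        + if x = 0 then u * sin α - 2 * sin θ * cos α else 0 := by
  have hreflect : sin (θ * |((k + 1 : ℤ) : ℝ)| + α) = sin (θ * |((k : ℤ) : ℝ)| + α) := by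
    rw [← sin_pi_sub]
    congr 1
    push_cast
    rw [abs_of_nonneg (by positivity), abs_of_nonneg (by positivity)]
    linear_combination -hθ
  rw [pathHR_one_mulVec_of_reflecting (fun y : ℤ => sin (θ * |(y : ℝ)| + α)) ?_ hreflect hx]
  · split_ifs with h0
    · subst h0
      simp only [Int.cast_zero, abs_zero, mul_zero, zero_add, zero_sub, Int.cast_neg,
        Int.cast_one, abs_neg, abs_one, mul_one, sin_add]
      ring
    · rw [sin_mul_abs_second_diff θ α h0, add_zero]
  · push_cast at hreflect ⊢
    rw [show -(k : ℝ) - 1 = -(k + 1) by ring, abs_neg, abs_neg, hreflect]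

theorem pathH_mulVec_ofReal {γ : ℤ → ℤ → ℝ} (f : Fin (2 * k + 1) → ℝ) :
    pathH k γ u *ᵥ (fun j => (f j : ℂ)) = fun i => ((pathHR k γ u *ᵥ f) i : ℂ) := by
  ext i
  exact (RingHom.map_mulVec Complex.ofRealHom _ _ i).symm

end PathOperator

theorem le_pathH_eigenvalues {k : ℕ} {u : ℝ} (hu : 0 < u) (i : Fin (2 * k + 1)) :
    2 - 2 * cos (π / (2 * k + 1 + 4 / u))
      ≤ (pathH_isHermitian k (fun _ _ => 1) u (fun _ _ => rfl)).eigenvalues i := by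
  set θ := π / (2 * k + 1 + 4 / u)
  set α := θ * (2 / u)
  have hθ : 0 < θ := by positivity
  have hα : 0 < α := by positivity
  have hsum : θ * (2 * k + 1) + 2 * α = π := by
    simp only [θ, α]
    field_simp
    ring
  have hφ : ∀ j : Fin (2 * k + 1), 0 < sin (θ * |(((j : ℤ) - k : ℤ) : ℝ)| + α) := fun j => by
    have hj : |(((j : ℤ) - k : ℤ) : ℝ)| ≤ k := by
      rw [abs_le]
      have : (j : ℝ) ≤ 2 * k := by exact_mod_cast Nat.le_of_lt_succ j.isLt
      constructor <;> push_cast <;> linarith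
    apply sin_pos_of_pos_of_lt_pi (by positivity)
    nlinarith [mul_le_mul_of_nonneg_left hj hθ.le]
  have hsuper : ∀ j : Fin (2 * k + 1),
      (2 - 2 * cos θ) * sin (θ * |(((j : ℤ) - k : ℤ) : ℝ)| + α)
        ≤ (pathHR k (fun _ _ => 1) u *ᵥ fun j => sin (θ * |(((j : ℤ) - k : ℤ) : ℝ)| + α)) j := by
    intro j
    rw [pathHR_one_mulVec_sin_mul_abs hsum rfl, le_add_iff_nonneg_right]
    split_ifs
    · have hα2 : α < π / 2 := by nlinarith
      linarith [two_mul_sin_mul_cos_le_mul_sin hu hθ hα2]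
    · rfl
  simpa using Matrix.le_re_of_hasEigenvalue_of_supersolution (fun _ _ => pathHR_one_apply_nonpos)
    hφ hsuper ((pathH_isHermitian k (fun _ _ => 1) u (fun _ _ => rfl)).hasEigenvalue_eigenvalues i)

theorem linearIndependent_sin_mul_sin_mul_abs {k : ℕ} (hk : 0 < k) {θ : ℝ} (hθ : sin θ ≠ 0) :
    LinearIndependent ℂ ![fun j : Fin (2 * k + 1) => (sin (θ * (((j : ℤ) - k : ℤ) : ℝ)) : ℂ),
      fun j : Fin (2 * k + 1) => (sin (θ * |(((j : ℤ) - k : ℤ) : ℝ)|) : ℂ)] := by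
  rw [LinearIndependent.pair_iff]
  intro p q hpq
  have hleft := congrFun hpq ⟨k - 1, by omega⟩
  have hright := congrFun hpq ⟨k + 1, by omega⟩
  have hl : (((k - 1 : ℕ) : ℤ) - k : ℤ) = -1 := by omega
  have hr : (((k + 1 : ℕ) : ℤ) - k : ℤ) = 1 := by omega
  simp only [Pi.add_apply, Pi.smul_apply, smul_eq_mul, Pi.zero_apply, hl, hr] at hleft hright
  simp only [Int.cast_neg, Int.cast_one, mul_neg, mul_one, abs_neg, abs_one, sin_neg,
    Complex.ofReal_neg] at hleft hright
  have h2θ : (2 * sin θ : ℂ) ≠ 0 := by exact_mod_cast mul_ne_zero two_ne_zero hθ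
  have hp : p * (2 * sin θ : ℂ) = 0 := by linear_combination hright - hleft
  have hq : q * (2 * sin θ : ℂ) = 0 := by linear_combination hright + hleft
  exact ⟨(mul_eq_zero.mp hp).resolve_right h2θ, (mul_eq_zero.mp hq).resolve_right h2θ⟩

theorem star_dotProduct_pathH_mulVec_of_mem_span {k : ℕ} {u θ : ℝ} (hθ : θ * (2 * k + 1) = π)
    {x : Fin (2 * k + 1) → ℂ}
    (hx : x ∈ Submodule.span ℂ
      {fun j : Fin (2 * k + 1) => (sin (θ * (((j : ℤ) - k : ℤ) : ℝ)) : ℂ),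
        fun j : Fin (2 * k + 1) => (sin (θ * |(((j : ℤ) - k : ℤ) : ℝ)|) : ℂ)}) :
    star x ⬝ᵥ pathH k (fun _ _ => 1) u *ᵥ x = (2 - 2 * cos θ : ℝ) * (star x ⬝ᵥ x) := by
  let A := pathH k (fun _ _ => 1) u
  let v : Fin (2 * k + 1) → ℂ := fun j => (sin (θ * (((j : ℤ) - k : ℤ) : ℝ)) : ℂ)
  let w : Fin (2 * k + 1) → ℂ := fun j => (sin (θ * |(((j : ℤ) - k : ℤ) : ℝ)|) : ℂ)
  have hv : ∀ j, (A *ᵥ v) j = (2 - 2 * cos θ : ℝ) * v j := fun j => by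
    simp only [A, v, pathH_mulVec_ofReal, pathHR_one_mulVec_sin_mul hθ rfl, Complex.ofReal_mul]
  have hw : ∀ j, (A *ᵥ w) j
      = (2 - 2 * cos θ : ℝ) * w j + if (j : ℤ) - k = 0 then -(2 * sin θ : ℝ) else 0 := fun j => by
    have := pathHR_one_mulVec_sin_mul_abs (α := 0) (u := u) (by simpa using hθ) (i := j) rfl
    simp only [add_zero, sin_zero, cos_zero, mul_zero, mul_one, zero_sub] at this
    simp only [A, w, pathH_mulVec_ofReal, this]
    split_ifs <;> simp only [Complex.ofReal_add, Complex.ofReal_mul, Complex.ofReal_zero, add_zero]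
  obtain ⟨p, q, rfl⟩ : ∃ p q : ℂ, p • v + q • w = x := Submodule.mem_span_pair.mp hx
  have hterm : ∀ j, star ((p • v + q • w) j) * (A *ᵥ (p • v + q • w)) j
      = (2 - 2 * cos θ : ℝ) * (star ((p • v + q • w) j) * (p • v + q • w) j) := fun j => by
    simp only [mulVec_add, mulVec_smul, Pi.add_apply, Pi.smul_apply, smul_eq_mul, hv, hw]
    by_cases hj : (j : ℤ) - k = 0
    · have hvw : v j = 0 ∧ w j = 0 := by
        simp only [v, w, hj, Int.cast_zero, mul_zero, abs_zero, sin_zero, Complex.ofReal_zero,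
          and_self]
      simp [hvw]
    · simp only [if_neg hj, Complex.ofReal_zero, add_zero]
      ring
  simp only [dotProduct, Pi.star_apply, mul_sum]
  exact sum_congr rfl fun j _ => hterm j

theorem pathH_sortedEig_one_le {k : ℕ} (hk : 0 < k) (u : ℝ) :
    sortedEig (pathH_isHermitian k (fun _ _ => 1) u (fun _ _ => rfl)) ⟨1, by omega⟩
      ≤ 2 - 2 * cos (π / (2 * k + 1)) := by
  set θ := π / (2 * k + 1)
  have hθ : θ * (2 * k + 1) = π := by simp only [θ]; field_simp
  have hsin : sin θ ≠ 0 := by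
    refine (sin_pos_of_pos_of_lt_pi (by positivity) ?_).ne'
    have hk1 : (1 : ℝ) < 2 * k + 1 := by
      have : (1 : ℝ) ≤ k := by exact_mod_cast hk
      linarith
    exact div_lt_self pi_pos hk1
  refine sortedEig_one_le_of_linearIndependent _ _
    (linearIndependent_sin_mul_sin_mul_abs hk hsin) fun x hx => ?_
  rw [star_dotProduct_pathH_mulVec_of_mem_span hθ hx, Complex.re_ofReal_mul]

theorem pathH_rescaled_gap_le {k : ℕ} (hk : 0 < k) {u : ℝ} (hu : 0 < u) :
    (2 * k + 1 : ℝ) ^ 2 *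
        (sortedEig (pathH_isHermitian k (fun _ _ => 1) u (fun _ _ => rfl)) ⟨1, by omega⟩ -
          sortedEig (pathH_isHermitian k (fun _ _ => 1) u (fun _ _ => rfl)) ⟨0, by omega⟩)
      ≤ 8 * π ^ 2 / (u * (2 * k + 1)) := by
  set hA := pathH_isHermitian k (fun _ _ => 1) u (fun _ _ => rfl)
  set n : ℝ := 2 * k + 1
  set d : ℝ := 4 / u
  have hn : 1 ≤ n := by simp only [n]; linarith [(Nat.cast_nonneg k : (0 : ℝ) ≤ k)]
  have hd : 0 < d := by positivity
  have hupper : sortedEig hA ⟨1, by omega⟩ ≤ 2 - 2 * cos (π / n) := pathH_sortedEig_one_le hk u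
  have hlower : 2 - 2 * cos (π / (n + d)) ≤ sortedEig hA ⟨0, by omega⟩ :=
    le_pathH_eigenvalues hu _
  have hcos := cos_sub_cos_le_sq_sub_sq_div_two (a := π / (n + d)) (b := π / n) (by positivity)
    (div_le_div_of_nonneg_left pi_pos.le (by positivity) (by linarith))
    (div_le_self pi_pos.le hn)
  have hsq : n ^ 2 * ((π / n) ^ 2 - (π / (n + d)) ^ 2)
      = π ^ 2 * (d * (2 * n + d)) / (n + d) ^ 2 := by
    field_simp
    ring
  calc n ^ 2 * (_ - _) ≤ n ^ 2 * ((π / n) ^ 2 - (π / (n + d)) ^ 2) :=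
        mul_le_mul_of_nonneg_left (by linarith) (by positivity)
    _ = π ^ 2 * (d * (2 * n + d)) / (n + d) ^ 2 := hsq
    _ ≤ 2 * π ^ 2 * d / n := by
        rw [div_le_div_iff₀ (by positivity) (by positivity)]
        have : 0 ≤ π ^ 2 * d * (3 * n * d + 2 * d ^ 2) := by positivity
        linear_combination this
    _ = 8 * π ^ 2 / (u * n) := by simp only [d]; field_simp; ring

/-- For `H_k = L + u δ₀` with `u > 0`, the rescaled spectral gap `(2k+1)² Γ(k)` tends to 0. -/
theorem rescaled_gap_tendsto_zero (u : ℝ) (hu : 0 < u) :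
    Tendsto (fun k : ℕ => ((2 * (k + 1) + 1 : ℕ) : ℝ) ^ 2 *
        (sortedEig (pathH_isHermitian (k + 1) (fun _ _ => 1) u (fun _ _ => rfl)) ⟨1, by omega⟩ -
         sortedEig (pathH_isHermitian (k + 1) (fun _ _ => 1) u (fun _ _ => rfl)) ⟨0, by omega⟩))
      atTop (nhds 0) := by
  have hsize : Tendsto (fun k : ℕ => u * (2 * ((k + 1 : ℕ) : ℝ) + 1)) atTop atTop := by
    refine Tendsto.const_mul_atTop hu (tendsto_atTop_add_const_right _ 1 ?_)
    exact (tendsto_natCast_atTop_atTop.comp (tendsto_add_atTop_nat 1)).const_mul_atTop two_pos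
  refine squeeze_zero (g := fun k : ℕ => 8 * π ^ 2 / (u * (2 * ((k + 1 : ℕ) : ℝ) + 1)))
    (fun k => ?_) (fun k => ?_) (tendsto_const_nhds.div_atTop hsize)
  · exact mul_nonneg (sq_nonneg _) (sub_nonneg.mpr (sortedEig_monotone _ (by simp)))
  · exact_mod_cast pathH_rescaled_gap_le k.succ_pos hu
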